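/- Let (a_n)_{n≥1} be a lacunary sequence of positive integers, i.e., there exists λ > 1 with a_{n+1} ≥ λ·a_n for all n. Then for any η > 0, the double sum over all pairs n ≠ m of |a_n − a_m|^{−η} converges. -/

import Mathlib

/-!
If `a` is lacunary with ratio `λ > 1` and `m < n`, then `a m ≤ a n / λ`, so
`a n - a m ≥ (1 - λ⁻¹) a n ≥ (1 - λ⁻¹) a 0 λⁿ`. With `s = λ^(-η/2) < 1` this gives
`|a n - a m|^(-η) ≤ C s^(2n) ≤ C s^m s^n`, and `(m, n) ↦ s^m s^n` is summable on `ℕ × ℕ`.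
-/

section Lacunary

variable {a : ℕ → ℝ} {lam : ℝ}

theorem mul_pow_le_of_lacunary (hlam : 0 ≤ lam) (hlac : ∀ n, lam * a n ≤ a (n + 1))
    (n : ℕ) : a 0 * lam ^ n ≤ a n := by
  induction n with
  | zero => simp
  | succ n ih =>
    calc a 0 * lam ^ (n + 1) = lam * (a 0 * lam ^ n) := by ring
      _ ≤ lam * a n := by gcongr
      _ ≤ a (n + 1) := hlac n

theorem mul_le_of_lacunary_of_lt (hlam : 1 ≤ lam) (hlac : ∀ n, lam * a n ≤ a (n + 1))
    (h0 : 0 ≤ a 0) {m n : ℕ} (hmn : m < n) : lam * a m ≤ a n := by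
  induction n, hmn using Nat.le_induction with
  | base => exact hlac m
  | succ k _ ih =>
    have hk : 0 ≤ a k := (mul_nonneg h0 (pow_nonneg (by linarith) k)).trans
      (mul_pow_le_of_lacunary (by linarith) hlac k)
    calc lam * a m ≤ a k := ih
      _ ≤ lam * a k := le_mul_of_one_le_left hk hlam
      _ ≤ a (k + 1) := hlac k

theorem mul_pow_le_sub_of_lacunary (hlam : 1 < lam) (hlac : ∀ n, lam * a n ≤ a (n + 1))
    (h0 : 0 ≤ a 0) {m n : ℕ} (hmn : m < n) :
    (1 - lam⁻¹) * a 0 * lam ^ n ≤ a n - a m := by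
  have hm : a m ≤ lam⁻¹ * a n := by
    rw [le_inv_mul_iff₀ (by linarith)]
    exact mul_le_of_lacunary_of_lt hlam.le hlac h0 hmn
  have hc : 0 ≤ 1 - lam⁻¹ := sub_nonneg.2 (inv_le_one_of_one_le₀ hlam.le)
  calc (1 - lam⁻¹) * a 0 * lam ^ n = (1 - lam⁻¹) * (a 0 * lam ^ n) := by ring
    _ ≤ (1 - lam⁻¹) * a n := by
      gcongr
      exact mul_pow_le_of_lacunary (by linarith) hlac n
    _ ≤ a n - a m := by linarith

theorem abs_sub_rpow_le_of_lacunary (hlam : 1 < lam) (hlac : ∀ n, lam * a n ≤ a (n + 1))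
    (h0 : 0 < a 0) {η : ℝ} (hη : 0 ≤ η) {m n : ℕ} (hmn : m < n) :
    |a n - a m| ^ (-η) ≤
      ((1 - lam⁻¹) * a 0) ^ (-η) * ((lam ^ (-η / 2)) ^ m * (lam ^ (-η / 2)) ^ n) := by
  set s := lam ^ (-η / 2)
  have hlam0 : 0 < lam := by linarith
  have hc : 0 < (1 - lam⁻¹) * a 0 := mul_pos (sub_pos.2 (inv_lt_one_of_one_lt₀ hlam)) h0
  have hgap := mul_pow_le_sub_of_lacunary hlam hlac h0.le hmn
  have hpos : 0 < (1 - lam⁻¹) * a 0 * lam ^ n := by positivity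
  have hsq : (lam ^ n) ^ (-η) = s ^ n * s ^ n := by
    rw [← mul_pow, ← Real.rpow_add hlam0, Real.rpow_pow_comm hlam0.le]
    ring_nf
  have hs1 : s ≤ 1 := Real.rpow_le_one_of_one_le_of_nonpos hlam.le (by linarith)
  calc |a n - a m| ^ (-η) ≤ ((1 - lam⁻¹) * a 0 * lam ^ n) ^ (-η) := by
        rw [abs_of_pos (hpos.trans_le hgap)]
        exact Real.rpow_le_rpow_of_nonpos hpos hgap (by linarith)
    _ = ((1 - lam⁻¹) * a 0) ^ (-η) * (s ^ n * s ^ n) := by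
        rw [Real.mul_rpow hc.le (by positivity), hsq]
    _ ≤ ((1 - lam⁻¹) * a 0) ^ (-η) * (s ^ m * s ^ n) := by
        gcongr _ * (?_ * _)
        exact pow_le_pow_of_le_one (by positivity) hs1 hmn.le

theorem summable_abs_sub_rpow_of_lacunary (hlam : 1 < lam)
    (hlac : ∀ n, lam * a n ≤ a (n + 1)) (h0 : 0 < a 0) {η : ℝ} (hη : 0 < η) :
    Summable (fun p : {p : ℕ × ℕ // p.1 ≠ p.2} => |a p.1.1 - a p.1.2| ^ (-η)) := by
  set s := lam ^ (-η / 2)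
  have hs0 : 0 ≤ s := by positivity
  have hs1 : s < 1 := Real.rpow_lt_one_of_one_lt_of_neg hlam (by linarith)
  have hgeom : Summable (fun p : ℕ × ℕ => s ^ p.1 * s ^ p.2) :=
    (summable_geometric_of_lt_one hs0 hs1).mul_of_nonneg
      (summable_geometric_of_lt_one hs0 hs1) (pow_nonneg hs0) (pow_nonneg hs0)
  refine .of_nonneg_of_le (fun _ => by positivity) (fun ⟨⟨m, n⟩, hmn⟩ => ?_)
    ((hgeom.mul_left (((1 - lam⁻¹) * a 0) ^ (-η))).subtype _)
  dsimp only [Function.comp_apply]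
  rcases hmn.lt_or_gt with h | h
  · rw [abs_sub_comm]
    exact abs_sub_rpow_le_of_lacunary hlam hlac h0 hη.le h
  · rw [mul_comm (s ^ m)]
    exact abs_sub_rpow_le_of_lacunary hlam hlac h0 hη.le h

end Lacunary

/-- For a lacunary sequence of positive integers `(a_n)` and any `η > 0`, the double sum
`∑_{n ≠ m} |a_n − a_m|^{−η}` converges. -/
theorem summable_lacunary_diff_rpow (a : ℕ → ℕ) (ha : ∀ n, 0 < a n) (lam : ℝ)
    (hlam : 1 < lam) (hlac : ∀ n, lam * a n ≤ a (n + 1)) (η : ℝ) (hη : 0 < η) :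
    Summable (fun p : {p : ℕ × ℕ // p.1 ≠ p.2} =>
      |(a p.1.1 : ℝ) - (a p.1.2 : ℝ)| ^ (-η)) :=
  summable_abs_sub_rpow_of_lacunary (a := fun n => (a n : ℝ)) hlam hlac
    (Nat.cast_pos.2 (ha 0)) hη
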